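/- For every positive definite Hermitian matrix σ and all matrices X, Y on a finite-dimensional complex Hilbert space, tr(Y · T_σ(X)) = tr(T_σ(Y) · X), where T_σ(Z) = ∫₀^∞ (σ + s·1)⁻¹ Z (σ + s·1)⁻¹ ds. In particular tr(σ · T_σ(X)) = tr(X). -/

import Mathlib

open Matrix MeasureTheory
open scoped ComplexOrder

/-- `T_σ(Z) = ∫₀^∞ (σ + s·1)⁻¹ Z (σ + s·1)⁻¹ ds`, defined entrywise. -/
noncomputable def Tmap {n : ℕ} (σ Z : Matrix (Fin n) (Fin n) ℂ) : Matrix (Fin n) (Fin n) ℂ :=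
  Matrix.of fun i j =>
    ∫ s in Set.Ioi (0 : ℝ),
      ((σ + (s : ℂ) • (1 : Matrix (Fin n) (Fin n) ℂ))⁻¹ * Z
        * (σ + (s : ℂ) • (1 : Matrix (Fin n) (Fin n) ℂ))⁻¹) i j

/-!
Write `σ = U diag(λ) U*` with `U` unitary and `λ > 0`. Then `(σ + s)⁻¹ = U diag((λ + s)⁻¹) U*`, so
in the eigenbasis of `σ` the map `T_σ` is the Hadamard product with the kernel
`K a b = ∫₀^∞ ds / ((λ a + s)(λ b + s))`. Since `K` is symmetric, `T_σ` is self-adjoint for the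
trace pairing, and since `λ a * K a a = 1`, `tr(σ T_σ(X)) = tr X`.
-/

open Set Filter
open scoped Topology

lemma hasDerivAt_neg_inv_add {m x : ℝ} (hx : m + x ≠ 0) :
    HasDerivAt (fun s : ℝ => -(m + s)⁻¹) ((m + x) ^ 2)⁻¹ x := by
  have h := (((hasDerivAt_id x).const_add m).inv hx).neg
  rwa [neg_div, neg_neg, one_div] at h

lemma tendsto_neg_inv_add_atTop (m : ℝ) : Tendsto (fun s : ℝ => -(m + s)⁻¹) atTop (𝓝 0) := by
  simpa using (tendsto_inv_atTop_zero.comp (tendsto_atTop_add_const_left _ m tendsto_id)).neg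

lemma integrableOn_Ioi_inv_add_sq {m : ℝ} (hm : 0 < m) :
    IntegrableOn (fun s : ℝ => ((m + s) ^ 2)⁻¹) (Ioi 0) :=
  integrableOn_Ioi_deriv_of_nonneg
    (hasDerivAt_neg_inv_add (by simpa using hm.ne')).continuousAt.continuousWithinAt
    (fun x hx => hasDerivAt_neg_inv_add (by linarith [hx.out]))
    (fun _ _ => by positivity) (tendsto_neg_inv_add_atTop m)

lemma integral_Ioi_inv_add_sq {m : ℝ} (hm : 0 < m) :
    ∫ s in Ioi 0, ((m + s) ^ 2)⁻¹ = m⁻¹ := by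
  simpa using integral_Ioi_of_hasDerivAt_of_tendsto'
    (fun x hx => hasDerivAt_neg_inv_add (by linarith [hx.out]))
    (integrableOn_Ioi_inv_add_sq hm) (tendsto_neg_inv_add_atTop m)

lemma integrableOn_Ioi_inv_add_mul_inv_add {p q : ℝ} (hp : 0 < p) (hq : 0 < q) :
    IntegrableOn (fun s : ℝ => (p + s)⁻¹ * (q + s)⁻¹) (Ioi 0) := by
  refine (integrableOn_Ioi_inv_add_sq (lt_min hp hq)).mono' ?_ ?_
  · refine ContinuousOn.aestronglyMeasurable ?_ measurableSet_Ioi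
    exact ((continuous_const_add p).continuousOn.inv₀ fun x hx => (add_pos hp hx).ne').mul
      ((continuous_const_add q).continuousOn.inv₀ fun x hx => (add_pos hq hx).ne')
  · refine (ae_restrict_iff' measurableSet_Ioi).mpr (ae_of_all _ fun x hx => ?_)
    have hx : 0 < x := hx
    rw [Real.norm_of_nonneg (by positivity), sq, mul_inv]
    gcongr
    exacts [min_le_left p q, min_le_right p q]

namespace Matrix

section Algebra

variable {ι R : Type*} [Fintype ι] [CommSemiring R]

lemma trace_mul_sandwich (Y U M V : Matrix ι ι R) :
    (Y * (U * M * V)).trace = (V * Y * U * M).trace := by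
  simpa only [Matrix.mul_assoc] using trace_mul_comm (Y * U * M) V

lemma trace_sandwich_mul (U M V X : Matrix ι ι R) :
    (U * M * V * X).trace = (M * (V * X * U)).trace := by
  simpa only [Matrix.mul_assoc] using trace_mul_comm U (M * V * X)

lemma trace_mul_hadamard_of_transpose_eq {K : Matrix ι ι R} (hK : Kᵀ = K) (A B : Matrix ι ι R) :
    (A * (K ⊙ B)).trace = (K ⊙ A * B).trace := by
  simp only [trace, diag_apply, mul_apply, hadamard_apply]
  refine Finset.sum_congr rfl fun i _ => Finset.sum_congr rfl fun j _ => ?_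
  rw [← congrFun (congrFun hK i) j, transpose_apply]
  ring

lemma trace_diagonal_mul_hadamard [DecidableEq ι] (d : ι → R) (K B : Matrix ι ι R) :
    (diagonal d * (K ⊙ B)).trace = ∑ a, d a * K a a * B a a := by
  simp only [trace, diag_apply, diagonal_mul, hadamard_apply, mul_assoc]

lemma diagonal_mul_mul_diagonal_eq_hadamard {m n : Type*} [Fintype m] [Fintype n]
    [DecidableEq m] [DecidableEq n] (d : m → R) (e : n → R) (M : Matrix m n R) :
    diagonal d * M * diagonal e = of (fun a b => d a * e b) ⊙ M := by
  ext a b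
  rw [mul_diagonal, diagonal_mul, hadamard_apply, of_apply]
  ring

end Algebra

section Unitary

variable {ι : Type*} [Fintype ι] [DecidableEq ι]

lemma trace_star_unitary_mul_mul {R : Type*} [CommRing R] [StarRing R] (U : unitaryGroup ι R)
    (X : Matrix ι ι R) : (star (U : Matrix ι ι R) * X * U).trace = X.trace := by
  rw [trace_mul_cycle, mem_unitaryGroup_iff.mp U.2, Matrix.one_mul]

lemma inv_unitary_mul_diagonal_mul_star {R : Type*} [Field R] [StarRing R]
    (U : unitaryGroup ι R) {d : ι → R} (hd : ∀ a, d a ≠ 0) :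
    ((U : Matrix ι ι R) * diagonal d * star (U : Matrix ι ι R))⁻¹ =
      U * diagonal d⁻¹ * star (U : Matrix ι ι R) := by
  refine inv_eq_right_inv ?_
  calc (U : Matrix ι ι R) * diagonal d * star (U : Matrix ι ι R) * (U * diagonal d⁻¹ * star U)
      = U * (diagonal d * (star (U : Matrix ι ι R) * U) * diagonal d⁻¹) * star U := by
        simp only [Matrix.mul_assoc]
    _ = 1 := by
        rw [mem_unitaryGroup_iff'.mp U.2, Matrix.mul_one, diagonal_mul_diagonal]
        simp [mul_inv_cancel₀ (hd _)]

variable {𝕜 : Type*} [RCLike 𝕜] {A : Matrix ι ι 𝕜}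

lemma IsHermitian.star_eigenvectorUnitary_mul_mul (hA : A.IsHermitian) :
    star (hA.eigenvectorUnitary : Matrix ι ι 𝕜) * A * (hA.eigenvectorUnitary : Matrix ι ι 𝕜) =
      diagonal (RCLike.ofReal ∘ hA.eigenvalues) :=
  (Unitary.conjStarAlgAut_star_apply (S := 𝕜) _ _).symm.trans
    hA.conjStarAlgAut_star_eigenvectorUnitary

lemma IsHermitian.add_smul_one_eq (hA : A.IsHermitian) (c : 𝕜) :
    A + c • (1 : Matrix ι ι 𝕜) = (hA.eigenvectorUnitary : Matrix ι ι 𝕜) *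
      diagonal (fun a => (hA.eigenvalues a : 𝕜) + c) *
        star (hA.eigenvectorUnitary : Matrix ι ι 𝕜) := by
  set U : Matrix ι ι 𝕜 := (hA.eigenvectorUnitary : Matrix ι ι 𝕜)
  have hc : c • (1 : Matrix ι ι 𝕜) = U * (c • 1) * star U := by
    rw [mul_smul_comm, Matrix.mul_one, smul_mul_assoc,
      mem_unitaryGroup_iff.mp hA.eigenvectorUnitary.2]
  conv_lhs => rw [hA.spectral_theorem, Unitary.conjStarAlgAut_apply, hc]
  rw [← add_mul, ← Matrix.mul_add, smul_one_eq_diagonal, diagonal_add]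
  rfl

lemma IsHermitian.inv_add_smul_one_eq (hA : A.IsHermitian) {c : 𝕜}
    (hc : ∀ a, (hA.eigenvalues a : 𝕜) + c ≠ 0) :
    (A + c • (1 : Matrix ι ι 𝕜))⁻¹ = (hA.eigenvectorUnitary : Matrix ι ι 𝕜) *
      diagonal (fun a => ((hA.eigenvalues a : 𝕜) + c)⁻¹) *
        star (hA.eigenvectorUnitary : Matrix ι ι 𝕜) := by
  rw [hA.add_smul_one_eq, inv_unitary_mul_diagonal_mul_star _ hc]
  rfl

end Unitary

lemma integral_mul_mul_apply {α l m n o 𝕜 : Type*} [MeasurableSpace α] {μ : Measure α}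
    [Fintype m] [Fintype n] [RCLike 𝕜] (A : Matrix l m 𝕜) (B : Matrix n o 𝕜)
    {F : α → Matrix m n 𝕜} (hF : ∀ a b, Integrable (fun s => F s a b) μ) (i : l) (j : o) :
    ∫ s, (A * F s * B) i j ∂μ = (A * of (fun a b => ∫ s, F s a b ∂μ) * B) i j := by
  have hterm : ∀ a b, Integrable (fun s => A i a * F s a b * B b j) μ :=
    fun a b => ((hF a b).const_mul _).mul_const _
  simp only [mul_apply, of_apply, Finset.sum_mul]
  rw [integral_finsetSum _ fun b _ => integrable_finsetSum _ fun a _ => hterm a b]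
  refine Finset.sum_congr rfl fun b _ => ?_
  rw [integral_finsetSum _ fun a _ => hterm a b]
  simp only [integral_mul_const, integral_const_mul]

end Matrix

/-- The first divided difference of `log` at `μ a, μ b` (for `μ > 0`). -/
noncomputable def tmapKernel {ι : Type*} (μ : ι → ℝ) : Matrix ι ι ℂ :=
  of fun a b => ∫ s in Ioi (0 : ℝ), (((μ a + s)⁻¹ * (μ b + s)⁻¹ : ℝ) : ℂ)

lemma transpose_tmapKernel {ι : Type*} (μ : ι → ℝ) : (tmapKernel μ)ᵀ = tmapKernel μ := by
  ext a b
  simp only [transpose_apply, tmapKernel, of_apply, mul_comm]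

lemma tmapKernel_apply_self {ι : Type*} {μ : ι → ℝ} {a : ι} (ha : 0 < μ a) :
    tmapKernel μ a a = ((μ a)⁻¹ : ℝ) := by
  rw [tmapKernel, of_apply, integral_complex_ofReal, ← integral_Ioi_inv_add_sq ha]
  simp only [sq, mul_inv]

lemma Matrix.PosDef.Tmap_eq_conj_hadamard {n : ℕ} {σ : Matrix (Fin n) (Fin n) ℂ}
    (hσ : σ.PosDef) (X : Matrix (Fin n) (Fin n) ℂ) :
    Tmap σ X = (hσ.1.eigenvectorUnitary : Matrix (Fin n) (Fin n) ℂ) *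
      (tmapKernel hσ.1.eigenvalues ⊙
        (star (hσ.1.eigenvectorUnitary : Matrix (Fin n) (Fin n) ℂ) * X *
          (hσ.1.eigenvectorUnitary : Matrix (Fin n) (Fin n) ℂ))) *
      star (hσ.1.eigenvectorUnitary : Matrix (Fin n) (Fin n) ℂ) := by
  set U : Matrix (Fin n) (Fin n) ℂ := (hσ.1.eigenvectorUnitary : Matrix (Fin n) (Fin n) ℂ)
  set μ := hσ.1.eigenvalues
  let k : ℝ → Matrix (Fin n) (Fin n) ℂ := fun s =>
    of fun a b => (((μ a + s)⁻¹ * (μ b + s)⁻¹ : ℝ) : ℂ)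
  have hres : ∀ s ∈ Ioi (0 : ℝ), (σ + (s : ℂ) • (1 : Matrix (Fin n) (Fin n) ℂ))⁻¹ * X *
      (σ + (s : ℂ) • (1 : Matrix (Fin n) (Fin n) ℂ))⁻¹ = U * (k s ⊙ (star U * X * U)) * star U := by
    intro s hs
    have hne : ∀ a, (μ a : ℂ) + s ≠ 0 := fun a => by
      exact_mod_cast (add_pos (hσ.eigenvalues_pos a) hs).ne'
    have hk : k s = of fun a b => ((μ a : ℂ) + s)⁻¹ * ((μ b : ℂ) + s)⁻¹ := by
      ext a b
      simp [k]
    rw [hσ.1.inv_add_smul_one_eq hne, hk, ← diagonal_mul_mul_diagonal_eq_hadamard]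
    simp only [U, μ, Matrix.mul_assoc]
    rfl
  ext i j
  rw [Tmap, of_apply, setIntegral_congr_fun measurableSet_Ioi
    (fun s hs => congrFun (congrFun (hres s hs) i) j), integral_mul_mul_apply]
  · refine congrArg (fun M : Matrix (Fin n) (Fin n) ℂ => (U * M * star U) i j) ?_
    ext a b
    simp only [k, of_apply, hadamard_apply, tmapKernel, integral_mul_const]
  · exact fun a b => ((integrableOn_Ioi_inv_add_mul_inv_add (hσ.eigenvalues_pos a)
      (hσ.eigenvalues_pos b)).ofReal.mul_const _)

theorem trace_Tmap_self_adjoint {n : ℕ} (σ X Y : Matrix (Fin n) (Fin n) ℂ) (hσ : σ.PosDef) :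
    (Y * Tmap σ X).trace = (Tmap σ Y * X).trace ∧ (σ * Tmap σ X).trace = X.trace := by
  refine ⟨?_, ?_⟩
  · rw [hσ.Tmap_eq_conj_hadamard, hσ.Tmap_eq_conj_hadamard, trace_mul_sandwich Y,
      trace_sandwich_mul _ _ _ X, trace_mul_hadamard_of_transpose_eq (transpose_tmapKernel _)]
  · rw [hσ.Tmap_eq_conj_hadamard, trace_mul_sandwich σ, hσ.1.star_eigenvectorUnitary_mul_mul,
      trace_diagonal_mul_hadamard, ← trace_star_unitary_mul_mul hσ.1.eigenvectorUnitary X, trace]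
    refine Finset.sum_congr rfl fun a _ => ?_
    have hμ := hσ.eigenvalues_pos a
    rw [Function.comp_apply, tmapKernel_apply_self hμ, diag_apply]
    simp [hμ.ne']
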